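/- Let m ≥ 1 and for x = (x_h,x_v) ∈ ℝᵐ × ℝ let σ(x) = [I_m, 0_m ; 0, x_hᵀ] be the Grushin matrix and U(x) = (|x_h|⁴ + 4x_v²)^{1/4}. Define G(x) = |σ(x)ᵀ∇U(x)|². Then U is a classical solution on ℝ^{m+1}∖{0} of the Aronsson equation for the Hamiltonian H²(x,p) = |σ(x)ᵀp|²: for every x ≠ 0, ∇G(x) · (2σ(x)σ(x)ᵀ∇U(x)) = 0, where 2σ(x)σ(x)ᵀ∇U(x) = (H²)_p(x,∇U(x)). -/

import Mathlib

/-!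
With `N = |x_h|⁴ + 4 x_v²` and `U = N^{1/4}` one computes `∇U = N^{-3/4} (|x_h|² x_h, 2 x_v)`.
Hence `G = |x_h|² N^{-1/2}`, and `(H²)_p(x, ∇U) = 2 N^{-3/4} |x_h|² (x_h, 2 x_v)` is a multiple of
the generator `(x_h, 2 x_v)` of the Grushin dilations `δ_r (x_h, x_v) = (r x_h, r² x_v)`. Both
`|x_h|²` and `N^{1/2}` scale by `r²` under `δ_r`, so `G` is dilation invariant and its derivative
along the generator vanishes.
-/

open Set
open scoped RealInnerProductSpace

/-- The horizontal part of the gradient of `U : ℝᵐ × ℝ → ℝ`. -/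
noncomputable def gradH {m : ℕ} (U : EuclideanSpace ℝ (Fin m) × ℝ → ℝ)
    (x : EuclideanSpace ℝ (Fin m) × ℝ) : EuclideanSpace ℝ (Fin m) :=
  (EuclideanSpace.equiv (Fin m) ℝ).symm
    (fun i => fderiv ℝ U x (EuclideanSpace.single i 1, 0))

/-- The vertical part of the gradient of `U : ℝᵐ × ℝ → ℝ`. -/
noncomputable def gradV {m : ℕ} (U : EuclideanSpace ℝ (Fin m) × ℝ → ℝ)
    (x : EuclideanSpace ℝ (Fin m) × ℝ) : ℝ :=
  fderiv ℝ U x (0, 1)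

open Filter Topology ContinuousLinearMap

namespace Grushin

section Dilation

variable {E F : Type*} [NormedAddCommGroup E] [NormedSpace ℝ E]
  [NormedAddCommGroup F] [NormedSpace ℝ F]

def dilate (r : ℝ) (x : E × ℝ) : E × ℝ := (r • x.1, r ^ 2 * x.2)

theorem hasDerivAt_dilate (x : E × ℝ) :
    HasDerivAt (fun r => dilate r x) (x.1, 2 * x.2) 1 := by
  have h := ((hasDerivAt_id (1 : ℝ)).smul_const x.1).prodMk
    ((hasDerivAt_pow 2 (1 : ℝ)).mul_const x.2)
  simpa [dilate] using h

theorem _root_.HasFDerivAt.apply_dilationGenerator_eq_zero {f : E × ℝ → F}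
    {D : E × ℝ →L[ℝ] F} {x : E × ℝ} (hf : HasFDerivAt f D x)
    (hinv : ∀ᶠ r in 𝓝 1, f (dilate r x) = f x) : D (x.1, 2 * x.2) = 0 := by
  have hcomp : HasDerivAt (fun r => f (dilate r x)) (D (x.1, 2 * x.2)) 1 :=
    hf.comp_hasDerivAt_of_eq 1 (hasDerivAt_dilate x) (by simp [dilate])
  exact hcomp.unique ((hasDerivAt_const 1 (f x)).congr_of_eventuallyEq hinv)

end Dilation

section Gauge

variable {E : Type*} [NormedAddCommGroup E]

def gaugePow4 (x : E × ℝ) : ℝ := ‖x.1‖ ^ 4 + 4 * x.2 ^ 2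

noncomputable def gauge (x : E × ℝ) : ℝ := gaugePow4 x ^ ((1 : ℝ) / 4)

/-- Closed form of `G = |σᵀ∇U|²` off the origin, where `gaugePow4 = U⁴`. -/
noncomputable def gaugeEnergy (x : E × ℝ) : ℝ := ‖x.1‖ ^ 2 * gaugePow4 x ^ (-(1 / 2) : ℝ)

theorem gaugePow4_nonneg (x : E × ℝ) : 0 ≤ gaugePow4 x := by
  unfold gaugePow4; positivity

theorem gaugePow4_pos {x : E × ℝ} (hx : x ≠ 0) : 0 < gaugePow4 x := by
  unfold gaugePow4
  rcases eq_or_ne x.1 0 with h1 | h1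
  · have h2 : x.2 ≠ 0 := fun h2 => hx (Prod.ext h1 h2)
    positivity
  · have : 0 < ‖x.1‖ := norm_pos_iff.2 h1
    positivity

theorem gaugePow4_dilate [NormedSpace ℝ E] (r : ℝ) (x : E × ℝ) :
    gaugePow4 (dilate r x) = r ^ 4 * gaugePow4 x := by
  simp only [gaugePow4, dilate, norm_smul, Real.norm_eq_abs, mul_pow, pow_abs]
  rw [abs_of_nonneg (by positivity)]
  ring

theorem gaugeEnergy_dilate [NormedSpace ℝ E] {r : ℝ} (hr : 0 < r) (x : E × ℝ) :
    gaugeEnergy (dilate r x) = gaugeEnergy x := by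
  have hr4 : (r ^ 4) ^ (-(1 / 2) : ℝ) = (r ^ 2)⁻¹ := by
    rw [← Real.rpow_natCast_mul hr.le, show ((4 : ℕ) : ℝ) * (-(1 / 2)) = -((2 : ℕ) : ℝ) by norm_num,
      Real.rpow_neg hr.le, Real.rpow_natCast]
  rw [gaugeEnergy, gaugePow4_dilate, Real.mul_rpow (by positivity) (gaugePow4_nonneg x), hr4]
  simp only [gaugeEnergy, dilate, norm_smul, Real.norm_eq_abs, mul_pow, sq_abs]
  field_simp

variable [InnerProductSpace ℝ E]

theorem hasFDerivAt_gaugePow4 (x : E × ℝ) :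
    HasFDerivAt gaugePow4 ((4 * ‖x.1‖ ^ 2) • (innerSL ℝ x.1).comp (fst ℝ E ℝ)
      + (8 * x.2) • snd ℝ E ℝ) x := by
  have h := ((hasFDerivAt_fst (𝕜 := ℝ) (p := x)).norm_sq.pow 2).add
    ((hasFDerivAt_snd (𝕜 := ℝ) (p := x)).pow 2 |>.const_mul (4 : ℝ))
  have hfun : gaugePow4 = (fun z : E × ℝ => (‖z.1‖ ^ 2) ^ 2) + fun z => 4 * z.2 ^ 2 := by
    funext z; simp only [gaugePow4, Pi.add_apply]; ring
  rw [hfun]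
  refine h.congr_fderiv ?_
  ext v <;> simp <;> ring

theorem hasFDerivAt_gauge {x : E × ℝ} (hx : x ≠ 0) :
    HasFDerivAt gauge (gaugePow4 x ^ (-(3 / 4) : ℝ) •
      (‖x.1‖ ^ 2 • (innerSL ℝ x.1).comp (fst ℝ E ℝ) + (2 * x.2) • snd ℝ E ℝ)) x := by
  have h := (hasFDerivAt_gaugePow4 x).rpow_const (p := 1 / 4) (Or.inl (gaugePow4_pos hx).ne')
  refine h.congr_fderiv ?_
  rw [show (1 / 4 : ℝ) - 1 = -(3 / 4) by norm_num]
  ext v <;> simp <;> ring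

theorem differentiableAt_gaugeEnergy {x : E × ℝ} (hx : x ≠ 0) :
    DifferentiableAt ℝ gaugeEnergy x :=
  (hasFDerivAt_fst.norm_sq.differentiableAt).mul
    ((hasFDerivAt_gaugePow4 x).differentiableAt.rpow_const (Or.inl (gaugePow4_pos hx).ne'))

end Gauge

section Euclidean

variable {m : ℕ} {x : EuclideanSpace ℝ (Fin m) × ℝ}

theorem gradH_gauge (hx : x ≠ 0) :
    gradH gauge x = (gaugePow4 x ^ (-(3 / 4) : ℝ) * ‖x.1‖ ^ 2) • x.1 := by
  ext i
  simp [gradH, (hasFDerivAt_gauge hx).fderiv, EuclideanSpace.inner_single_right]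
  ring

theorem gradV_gauge (hx : x ≠ 0) :
    gradV gauge x = gaugePow4 x ^ (-(3 / 4) : ℝ) * (2 * x.2) := by
  simp [gradV, (hasFDerivAt_gauge hx).fderiv]

theorem norm_gradH_gauge_sq_add_gradV_gauge_sq_mul (hx : x ≠ 0) :
    ‖gradH gauge x‖ ^ 2 + gradV gauge x ^ 2 * ‖x.1‖ ^ 2 = gaugeEnergy x := by
  have hN := gaugePow4_pos hx
  have hpow : (gaugePow4 x ^ (-(3 / 4) : ℝ)) ^ 2 * gaugePow4 x = gaugePow4 x ^ (-(1 / 2) : ℝ) := by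
    rw [← Real.rpow_natCast, ← Real.rpow_mul hN.le, ← Real.rpow_add_one hN.ne']
    norm_num
  rw [gradH_gauge hx, gradV_gauge hx, norm_smul, Real.norm_of_nonneg (by positivity),
    gaugeEnergy, ← hpow, gaugePow4]
  ring

/-- The left side is `(H²)_p(x, ∇U(x))`. -/
theorem hamiltonianDirection_gauge (hx : x ≠ 0) :
    ((2 : ℝ) • gradH gauge x, 2 * gradV gauge x * ‖x.1‖ ^ 2) =
      (2 * gaugePow4 x ^ (-(3 / 4) : ℝ) * ‖x.1‖ ^ 2) • (x.1, 2 * x.2) := by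
  rw [gradH_gauge hx, gradV_gauge hx, Prod.smul_mk, smul_smul, smul_eq_mul]
  congr 1
  · congr 1
    ring
  · ring

end Euclidean

end Grushin

open Grushin in
theorem stmt_15 {m : ℕ}
    (U : EuclideanSpace ℝ (Fin m) × ℝ → ℝ)
    (hU : ∀ x : EuclideanSpace ℝ (Fin m) × ℝ,
      U x = (‖x.1‖ ^ 4 + 4 * x.2 ^ 2) ^ ((1:ℝ)/4))
    (G : EuclideanSpace ℝ (Fin m) × ℝ → ℝ)
    (hG : ∀ x, G x = ‖gradH U x‖ ^ 2 + (gradV U x) ^ 2 * ‖x.1‖ ^ 2) :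
    ∀ x : EuclideanSpace ℝ (Fin m) × ℝ, x ≠ 0 →
      DifferentiableAt ℝ U x ∧
      ∃ DG : EuclideanSpace ℝ (Fin m) × ℝ →L[ℝ] ℝ,
        HasFDerivAt G DG x ∧
        DG ((2:ℝ) • gradH U x, 2 * gradV U x * ‖x.1‖ ^ 2) = 0 := by
  intro x hx
  obtain rfl : U = Grushin.gauge := funext hU
  have hGE : G =ᶠ[𝓝 x] gaugeEnergy := by
    filter_upwards [isOpen_ne.mem_nhds hx] with y hy
    rw [hG, norm_gradH_gauge_sq_add_gradV_gauge_sq_mul hy]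
  have hE := (differentiableAt_gaugeEnergy hx).hasFDerivAt
  have hinv : ∀ᶠ r in 𝓝 (1 : ℝ), gaugeEnergy (dilate r x) = gaugeEnergy x :=
    (lt_mem_nhds one_pos).mono fun r hr => gaugeEnergy_dilate hr x
  refine ⟨(hasFDerivAt_gauge hx).differentiableAt, _, hE.congr_of_eventuallyEq hGE, ?_⟩
  rw [hamiltonianDirection_gauge hx, map_smul, hE.apply_dilationGenerator_eq_zero hinv, smul_zero]
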